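/- arXiv:1802.00212 — 2 statements merged into one kernel-verified Lean document; each statement's English description precedes it below -/
import Mathlib

section
/- For every real n > 1, there exists a unique x < 0 such that f_n(x) = x, i.e., PoLU with n > 1 intersects the line y = x at exactly one negative point. -/
noncomputable def polu (n : ℝ) (x : ℝ) : ℝ :=
  if 0 ≤ x then x else (1 - x) ^ (-n) - 1

/-!
Substituting `t = 1 - x`, the negative fixed points of `polu n` are the solutions `t > 1` of
`t ^ (-n) + t = 2`. The left-hand side is strictly convex on `(0, ∞)` and equals `2` at `t = 1`,
so it takes the value `2` at most once more on `(1, ∞)`. Its slope `1 - n` at `t = 1` is negative,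
so it dips below `2` just to the right of `1` (Bernoulli's inequality makes this quantitative),
while it exceeds `2` at `t = 2`; the intermediate value theorem gives the solution.
-/

open Set

theorem strictConvexOn_rpow_of_neg {p : ℝ} (hp : p < 0) :
    StrictConvexOn ℝ (Ioi 0) fun x : ℝ ↦ x ^ p := by
  refine strictConvexOn_of_deriv2_pos' (convex_Ioi 0)
    (fun x hx ↦ (Real.continuousAt_rpow_const x p (Or.inl (ne_of_gt hx))).continuousWithinAt)
    fun x hx ↦ ?_
  have hpoch : (descPochhammer ℝ 2).eval p = p * (p - 1) := by
    simp [descPochhammer_succ_right]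
  rw [Real.iter_deriv_rpow_const, hpoch]
  exact mul_pos (mul_pos_of_neg_of_neg hp (by linarith)) (Real.rpow_pos_of_pos hx _)

theorem StrictConvexOn.apply_lt_of_apply_eq {𝕜 : Type*} [Field 𝕜] [LinearOrder 𝕜]
    [IsStrictOrderedRing 𝕜] {s : Set 𝕜} {f : 𝕜 → 𝕜} (hf : StrictConvexOn 𝕜 s f) {x y z : 𝕜}
    (hx : x ∈ s) (hz : z ∈ s) (hxy : x < y) (hyz : y < z) (h : f x = f y) : f y < f z := by
  have := hf.slope_strict_mono_adjacent hx hz hxy hyz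
  rw [h, sub_self, zero_div, div_pos_iff_of_pos_right (sub_pos.2 hyz), sub_pos] at this
  exact this

theorem polu_eq_self_iff {n x : ℝ} (hx : x < 0) :
    polu n x = x ↔ (1 - x) ^ (-n) + (1 - x) = 2 := by
  rw [polu, if_neg hx.not_ge]
  constructor <;> intro h <;> linarith

theorem one_add_rpow_neg_add_lt_two {n s : ℝ} (hn : 1 ≤ n) (hs : 0 < s) (hns : n * s < n - 1) :
    (1 + s) ^ (-n) + (1 + s) < 2 := by
  have hbern : 1 + n * s ≤ (1 + s) ^ n := one_add_mul_self_le_rpow_one_add (by linarith) hn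
  have hpos : 0 < 1 + n * s := by nlinarith
  calc (1 + s) ^ (-n) + (1 + s) = ((1 + s) ^ n)⁻¹ + (1 + s) := by
        rw [Real.rpow_neg (by linarith)]
    _ ≤ (1 + n * s)⁻¹ + (1 + s) := by gcongr
    _ < 2 := by
        rw [← lt_sub_iff_add_lt, inv_lt_iff_one_lt_mul₀ hpos]
        nlinarith

theorem exists_rpow_neg_add_eq_two {n : ℝ} (hn : 1 < n) :
    ∃ t : ℝ, 1 < t ∧ t ^ (-n) + t = 2 := by
  set s := (n - 1) / (2 * n)
  have hs : 0 < s := div_pos (by linarith) (by linarith)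
  have hs1 : s < 1 := by rw [div_lt_one (by linarith)]; linarith
  have hns : n * s < n - 1 := by
    have : n * s = (n - 1) / 2 := by simp only [s]; field_simp
    linarith
  have hcont : ContinuousOn (fun t : ℝ ↦ t ^ (-n) + t) (Icc (1 + s) 2) := fun t ht ↦
    ((Real.continuousAt_rpow_const t (-n) (Or.inl (by linarith [ht.1]))).add
      continuousAt_id).continuousWithinAt
  have hlow := one_add_rpow_neg_add_lt_two hn.le hs hns
  have hhigh : 2 < (2 : ℝ) ^ (-n) + 2 := by linarith [Real.rpow_pos_of_pos two_pos (-n)]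
  obtain ⟨t, ht, heq⟩ :=
    intermediate_value_Icc (by linarith) hcont ⟨hlow.le, hhigh.le⟩
  exact ⟨t, by linarith [ht.1], heq⟩

theorem eq_of_rpow_neg_add_eq_two {n t u : ℝ} (hn : 0 < n) (ht : 1 < t) (hu : 1 < u)
    (hteq : t ^ (-n) + t = 2) (hueq : u ^ (-n) + u = 2) : t = u := by
  have hconv : StrictConvexOn ℝ (Ioi 0) fun x : ℝ ↦ x ^ (-n) + x :=
    (strictConvexOn_rpow_of_neg (neg_neg_of_pos hn)).add_convexOn (convexOn_id (convex_Ioi 0))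
  have hone : (1 : ℝ) ^ (-n) + 1 = 2 := by norm_num
  have no_second : ∀ {a b : ℝ}, 1 < a → a < b → a ^ (-n) + a = 2 → b ^ (-n) + b ≠ 2 := by
    intro a b ha hab haeq hbeq
    have := hconv.apply_lt_of_apply_eq (mem_Ioi.2 one_pos) (mem_Ioi.2 (by linarith)) ha hab
      (hone.trans haeq.symm)
    linarith
  rcases lt_trichotomy t u with h | h | h
  · exact absurd hueq (no_second ht h hteq)
  · exact h
  · exact absurd hteq (no_second hu h hueq)

theorem polu_unique_neg_fixed_point (n : ℝ) (hn : 1 < n) :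
    ∃! x : ℝ, x < 0 ∧ polu n x = x := by
  obtain ⟨t, ht, heq⟩ := exists_rpow_neg_add_eq_two hn
  refine ⟨1 - t, ⟨by linarith, (polu_eq_self_iff (by linarith)).2 (by rwa [sub_sub_cancel])⟩, ?_⟩
  rintro x ⟨hx, hfix⟩
  have := eq_of_rpow_neg_add_eq_two (by linarith) (by linarith) ht
    ((polu_eq_self_iff hx).1 hfix) heq
  linarith
end

section
/- For every real n > 1, the function φ̂_n(x) = f_n(x) + f_n(-x) has exactly two global minima, located at x = ±(n^{1/(n+1)} - 1), and φ̂_n is strictly decreasing on [0, n^{1/(n+1)} - 1] and strictly increasing on [n^{1/(n+1)} - 1, ∞). -/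
noncomputable def phiHat (n : ℝ) (x : ℝ) : ℝ := polu n x + polu n (-x)

lemma phiHat_even (n x : ℝ) : phiHat n (-x) = phiHat n x := by
  simp [phiHat, neg_neg, add_comm]

lemma phiHat_eq (n : ℝ) {x : ℝ} (hx : 0 ≤ x) :
    phiHat n x = x + (1 + x) ^ (-n) - 1 := by
  rcases eq_or_lt_of_le hx with h | h
  · simp [phiHat, polu, ← h, Real.one_rpow]
  · have h1 : ¬ (0 ≤ -x) := by linarith
    simp only [phiHat, polu, if_pos hx, if_neg h1, sub_neg_eq_add]
    ring

lemma hasDerivAt_F (n : ℝ) {x : ℝ} (hx : 0 < 1 + x) :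
    HasDerivAt (fun y : ℝ => y + (1 + y) ^ (-n) - 1)
      (1 + (-n) * (1 + x) ^ (-n - 1)) x := by
  have h1 : HasDerivAt (fun y : ℝ => 1 + y) 1 x := by
    simpa using (hasDerivAt_id x).const_add (1 : ℝ)
  have h2 : HasDerivAt (fun y : ℝ => y ^ (-n)) ((-n) * (1 + x) ^ (-n - 1)) (1 + x) :=
    Real.hasDerivAt_rpow_const (Or.inl (ne_of_gt hx))
  have h3 := h2.comp x h1
  simpa using ((hasDerivAt_id x).add h3).sub_const 1

theorem phiHat_two_minima (n : ℝ) (hn : 1 < n) :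
    phiHat n (-(n ^ ((1:ℝ)/(n+1)) - 1)) = phiHat n (n ^ ((1:ℝ)/(n+1)) - 1) ∧
    (∀ x : ℝ, x ≠ n ^ ((1:ℝ)/(n+1)) - 1 → x ≠ -(n ^ ((1:ℝ)/(n+1)) - 1) →
      phiHat n (n ^ ((1:ℝ)/(n+1)) - 1) < phiHat n x) ∧
    StrictAntiOn (phiHat n) (Set.Icc 0 (n ^ ((1:ℝ)/(n+1)) - 1)) ∧
    StrictMonoOn (phiHat n) (Set.Ici (n ^ ((1:ℝ)/(n+1)) - 1)) := by
  have hn0 : (0:ℝ) < n := by linarith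
  set a : ℝ := n ^ ((1:ℝ)/(n+1)) - 1 with ha_def
  have hrt : 1 < n ^ ((1:ℝ)/(n+1)) :=
    (Real.one_lt_rpow_iff_of_pos hn0).mpr (Or.inl ⟨hn, by positivity⟩)
  have ha : 0 < a := by simp only [ha_def]; linarith
  have hNN : (n ^ ((1:ℝ)/(n+1))) ^ (n+1) = n := by
    rw [← Real.rpow_mul hn0.le, one_div, inv_mul_cancel₀ (by linarith), Real.rpow_one]
  set F : ℝ → ℝ := fun y => y + (1 + y) ^ (-n) - 1 with hF_def
  have heq : ∀ x : ℝ, 0 ≤ x → phiHat n x = F x := fun x hx => phiHat_eq n hx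
  have hderiv : ∀ x : ℝ, 0 ≤ x → deriv F x = 1 - n * ((1+x)^(n+1))⁻¹ := by
    intro x hx
    have hx1 : (0:ℝ) < 1 + x := by linarith
    rw [(hasDerivAt_F n hx1).deriv]
    have h2 : (-n - 1 : ℝ) = -(n+1) := by ring
    rw [h2, Real.rpow_neg hx1.le]
    ring
  have hpos : ∀ x : ℝ, 0 ≤ x → (0:ℝ) < (1+x)^(n+1) :=
    fun x hx => Real.rpow_pos_of_pos (by linarith) _
  have hpow_lt : ∀ x : ℝ, 0 ≤ x → x < a → (1+x)^(n+1) < n := by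
    intro x hx hxa
    have h1 : 1 + x < n ^ ((1:ℝ)/(n+1)) := by simp only [ha_def] at hxa; linarith
    have := Real.rpow_lt_rpow (by linarith : (0:ℝ) ≤ 1 + x) h1 (by linarith : (0:ℝ) < n + 1)
    rwa [hNN] at this
  have hpow_gt : ∀ x : ℝ, a < x → n < (1+x)^(n+1) := by
    intro x hxa
    have h1 : n ^ ((1:ℝ)/(n+1)) < 1 + x := by simp only [ha_def] at hxa; linarith
    have := Real.rpow_lt_rpow (by positivity) h1 (by linarith : (0:ℝ) < n + 1)
    rwa [hNN] at this
  have hcont : ∀ x : ℝ, 0 ≤ x → ContinuousAt F x := by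
    intro x hx
    exact (hasDerivAt_F n (by linarith : (0:ℝ) < 1 + x)).continuousAt
  have hantiF : StrictAntiOn F (Set.Icc 0 a) := by
    apply strictAntiOn_of_deriv_neg (convex_Icc 0 a)
      (fun x hx => (hcont x hx.1).continuousWithinAt)
    intro x hx
    rw [interior_Icc] at hx
    rw [hderiv x hx.1.le]
    have hc := hpos x hx.1.le
    have h1 : 1 < n * ((1+x)^(n+1))⁻¹ := by
      rw [← div_eq_mul_inv, lt_div_iff₀ hc]
      have := hpow_lt x hx.1.le hx.2
      linarith
    linarith
  have hmonoF : StrictMonoOn F (Set.Ici a) := by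
    apply strictMonoOn_of_deriv_pos (convex_Ici a)
      (fun x hx => (hcont x (le_trans ha.le hx)).continuousWithinAt)
    intro x hx
    rw [interior_Ici] at hx
    have hx0 : (0:ℝ) ≤ x := le_trans ha.le (le_of_lt hx)
    rw [hderiv x hx0]
    have hc := hpos x hx0
    have h1 : n * ((1+x)^(n+1))⁻¹ < 1 := by
      rw [← div_eq_mul_inv, div_lt_one hc]
      exact hpow_gt x hx
    linarith
  have hanti : StrictAntiOn (phiHat n) (Set.Icc 0 a) := by
    intro x hx y hy hxy
    rw [heq x hx.1, heq y hy.1]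
    exact hantiF hx hy hxy
  have hmono : StrictMonoOn (phiHat n) (Set.Ici a) := by
    intro x hx y hy hxy
    rw [heq x (le_trans ha.le hx), heq y (le_trans ha.le hy)]
    exact hmonoF hx hy hxy
  refine ⟨phiHat_even n a, ?_, hanti, hmono⟩
  intro x hx1 hx2
  have habs : phiHat n x = phiHat n |x| := by
    rcases abs_cases x with ⟨h, _⟩ | ⟨h, _⟩
    · rw [h]
    · rw [h, phiHat_even]
  rw [habs]
  have hne : |x| ≠ a := by
    rcases abs_cases x with ⟨h, _⟩ | ⟨h, _⟩
    · rw [h]; exact hx1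
    · rw [h]; intro hc; exact hx2 (by linarith)
  rcases lt_or_gt_of_ne hne with h | h
  · exact hanti ⟨abs_nonneg x, h.le⟩ ⟨ha.le, le_rfl⟩ h
  · exact hmono (Set.mem_Ici.mpr le_rfl) (Set.mem_Ici.mpr h.le) h
end
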